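/- (Casimir for d ≠ 0) The function C(x,y,z) = x(ax−2by+2cz+2d) − (4bc/a)yz is a Casimir of the Poisson structure π: for all (x,y,z) ∈ ℝ³, π(x,y,z) · ∇C(x,y,z) = 0, where ∇C(x,y,z) = (2ax−2by+2cz+2d, −2bx−(4bc/a)z, 2cx−(4bc/a)y). -/

import Mathlib

/-! Every entry of `π` carries the factor `1/d`, so `π = d⁻¹ • π₀` with
`π₀ = scaledPoissonMatrix` free of `1/d`, and it suffices to check `π₀ · ∇C = 0`; that is a
polynomial identity once `a ≠ 0` clears the denominators `a`. -/

noncomputable def scaledPoissonMatrix (a b c d x y z : ℝ) : Matrix (Fin 3) (Fin 3) ℝ :=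
  !![0, c / a * (a * x - 2 * b * y), b / a * (a * x + 2 * c * z);
    -(c / a * (a * x - 2 * b * y)), 0, a * x - b * y + c * z + d;
    -(b / a * (a * x + 2 * c * z)), -(a * x - b * y + c * z + d), 0]

theorem poissonMatrix_eq_inv_smul (a b c d x y z : ℝ) :
    (!![0, c / (a * d) * (a * x - 2 * b * y), b / (a * d) * (a * x + 2 * c * z);
        -(c / (a * d) * (a * x - 2 * b * y)), 0, 1 / d * (a * x - b * y + c * z + d);
        -(b / (a * d) * (a * x + 2 * c * z)), -(1 / d * (a * x - b * y + c * z + d)), 0]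
      : Matrix (Fin 3) (Fin 3) ℝ) = d⁻¹ • scaledPoissonMatrix a b c d x y z := by
  ext i j
  fin_cases i <;> fin_cases j <;> simp [scaledPoissonMatrix] <;> ring

theorem scaledPoissonMatrix_mulVec_casimir_grad {a : ℝ} (ha : a ≠ 0) (b c d x y z : ℝ) :
    (scaledPoissonMatrix a b c d x y z).mulVec
      ![2 * a * x - 2 * b * y + 2 * c * z + 2 * d,
        -(2 * b * x) - 4 * b * c / a * z,
        2 * c * x - 4 * b * c / a * y] = 0 := by
  ext i
  fin_cases i <;>
  · simp [scaledPoissonMatrix, Matrix.mulVec, dotProduct, Fin.sum_univ_three]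
    field_simp
    ring

theorem C_Casimir_d (a b c d : ℝ)
    (ha : a ≠ 0) (x y z : ℝ) :
    (!![0, c / (a * d) * (a * x - 2 * b * y), b / (a * d) * (a * x + 2 * c * z);
        -(c / (a * d) * (a * x - 2 * b * y)), 0, 1 / d * (a * x - b * y + c * z + d);
        -(b / (a * d) * (a * x + 2 * c * z)), -(1 / d * (a * x - b * y + c * z + d)), 0]
      : Matrix (Fin 3) (Fin 3) ℝ).mulVec
      ![2 * a * x - 2 * b * y + 2 * c * z + 2 * d,
        -(2 * b * x) - 4 * b * c / a * z,
        2 * c * x - 4 * b * c / a * y] = 0 := by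
  rw [poissonMatrix_eq_inv_smul, Matrix.smul_mulVec, scaledPoissonMatrix_mulVec_casimir_grad ha,
    smul_zero]
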